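/- ∑_{n=0}^∞ 1/sinh(2ⁿ) = coth(1/2) − 1. -/

import Mathlib

/-- The real hyperbolic cotangent. -/
noncomputable def Real.coth (x : ℝ) : ℝ := Real.cosh x / Real.sinh x

/-!
The addition formula for `sinh` gives `1 / sinh x = coth (x / 2) - coth x`, so the series
telescopes: its `N`-th partial sum is `coth (1 / 2) - coth (2 ^ N / 2)`, and `coth t → 1` as
`t → ∞`. The terms are positive, so convergence of the partial sums gives the unconditional sum.
-/

open Filter Topology

namespace Real

lemma coth_eq_one_add_exp_div_one_sub_exp (x : ℝ) :
    coth x = (1 + exp (-2 * x)) / (1 - exp (-2 * x)) := by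
  have hexp : exp (-2 * x) = exp (-x) * exp (-x) := by rw [← exp_add]; ring_nf
  have hinv : exp (-x) * exp x = 1 := by rw [← exp_add, neg_add_cancel, exp_zero]
  have hcosh : 1 + exp (-2 * x) = exp (-x) * (2 * cosh x) := by
    rw [hexp, cosh_eq]; linear_combination -hinv
  have hsinh : 1 - exp (-2 * x) = exp (-x) * (2 * sinh x) := by
    rw [hexp, sinh_eq]; linear_combination -hinv
  rw [coth, hcosh, hsinh, mul_div_mul_left _ _ (exp_ne_zero _),
    mul_div_mul_left _ _ two_ne_zero]

lemma tendsto_coth_atTop : Tendsto coth atTop (𝓝 1) := by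
  have hexp : Tendsto (fun x : ℝ => exp (-2 * x)) atTop (𝓝 0) :=
    tendsto_exp_atBot.comp (tendsto_id.const_mul_atTop_of_neg (by norm_num))
  have hlim := ((tendsto_const_nhds (x := (1 : ℝ))).add hexp).div
    ((tendsto_const_nhds (x := (1 : ℝ))).sub hexp) (by norm_num)
  rw [funext coth_eq_one_add_exp_div_one_sub_exp]
  simpa only [Pi.div_def, add_zero, sub_zero, div_one] using hlim

/-- At `x = 0` both sides are `0`, by the convention `1 / 0 = 0`. -/
lemma one_div_sinh_eq_coth_half_sub_coth (x : ℝ) : 1 / sinh x = coth (x / 2) - coth x := by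
  rcases eq_or_ne x 0 with rfl | hx
  · simp [coth]
  have hhalf : sinh (x / 2) ≠ 0 := sinh_ne_zero.2 (div_ne_zero hx two_ne_zero)
  have hsinh : sinh x ≠ 0 := sinh_ne_zero.2 hx
  have hnum : cosh (x / 2) * sinh x - sinh (x / 2) * cosh x = sinh (x / 2) := by
    rw [mul_comm, mul_comm (sinh (x / 2)), ← sinh_sub, sub_half]
  rw [coth, coth, div_sub_div _ _ hhalf hsinh, hnum, eq_div_iff (mul_ne_zero hhalf hsinh)]
  field_simp

end Real

lemma hasSum_sub_succ_of_tendsto {f : ℕ → ℝ} {l : ℝ} (hf : Tendsto f atTop (𝓝 l))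
    (hmono : ∀ n, f (n + 1) ≤ f n) : HasSum (fun n => f n - f (n + 1)) (f 0 - l) := by
  rw [hasSum_iff_tendsto_nat_of_nonneg (fun n => sub_nonneg.2 (hmono n))]
  simp only [Finset.sum_range_sub']
  exact hf.const_sub (f 0)

theorem stmt3 :
    HasSum (fun n : ℕ => 1 / Real.sinh (2 ^ n)) (Real.coth (1 / 2) - 1) := by
  set f : ℕ → ℝ := fun n => Real.coth (2 ^ n / 2)
  have hterm : ∀ n, 1 / Real.sinh (2 ^ n) = f n - f (n + 1) := fun n => by
    rw [Real.one_div_sinh_eq_coth_half_sub_coth]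
    simp [f, pow_succ]
  have hlim : Tendsto f atTop (𝓝 1) :=
    Real.tendsto_coth_atTop.comp
      ((tendsto_pow_atTop_atTop_of_one_lt one_lt_two).atTop_div_const two_pos)
  have hmono : ∀ n, f (n + 1) ≤ f n := fun n => by
    rw [← sub_nonneg, ← hterm]
    exact one_div_nonneg.2 (Real.sinh_nonneg_iff.2 (by positivity))
  simpa only [hterm, f, pow_zero] using hasSum_sub_succ_of_tendsto hlim hmono
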